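/- Let n ≥ 1 and let p_1, …, p_{n+1} be pairwise distinct propositional constants. The formula ⋀_{i=1}^{n} EX(¬p_i ∧ p_{i+1}) ∧ ⋀_{i=1}^{n} AX(¬p_i ∨ p_{i+1}) is a satisfiable CTL* formula, and in every transition system T with a state s such that T, s satisfies this formula, the state s has at least n distinct successors. -/

import Mathlib

/-- Branching-time formulas in negation normal form. -/
inductive Form : Type where
  | tt : Form
  | ff : Form
  | prop : ℕ → Form
  | nprop : ℕ → Form
  | or : Form → Form → Form
  | and : Form → Form → Form
  | next : Form → Form
  | unt : Form → Form → Form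
  | rel : Form → Form → Form
  | ex : Form → Form
  | al : Form → Form
deriving DecidableEq

namespace Form

/-- The set of subformulas of a formula. -/
def subf : Form → Finset Form
  | .tt => {.tt}
  | .ff => {.ff}
  | .prop p => {.prop p}
  | .nprop p => {.nprop p}
  | .or a b => insert (.or a b) (a.subf ∪ b.subf)
  | .and a b => insert (.and a b) (a.subf ∪ b.subf)
  | .next a => insert (.next a) a.subf
  | .unt a b => insert (.unt a b) (a.subf ∪ b.subf)
  | .rel a b => insert (.rel a b) (a.subf ∪ b.subf)
  | .ex a => insert (.ex a) a.subf
  | .al a => insert (.al a) a.subf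

/-- Literals are `tt`, `ff`, `p` and `¬p`. -/
def IsLiteral : Form → Prop
  | .tt => True
  | .ff => True
  | .prop _ => True
  | .nprop _ => True
  | _ => False

/-- A formula of the form `Xφ`. -/
def IsNext : Form → Prop
  | .next _ => True
  | _ => False

/-- Remove a frontal `X`. -/
def unX : Form → Form
  | .next a => a
  | a => a

end Form

/-- The Fischer-Ladner closure of a formula: its subformulas together with
`X(φ U ψ)` for every subformula `φ U ψ` and `X(φ R ψ)` for every subformula `φ R ψ`. -/
def FL (θ : Form) : Finset Form :=
  θ.subf ∪ θ.subf.image (fun ψ =>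
    match ψ with
    | .unt a b => Form.next (.unt a b)
    | .rel a b => Form.next (.rel a b)
    | _ => θ)

/-- A (total) transition system with a designated initial state and a labeling
of states with sets of propositional constants. -/
structure TS (S : Type) where
  init : S
  step : S → S → Prop
  total : ∀ s, ∃ t, step s t
  label : S → Set ℕ

/-- An infinite path through a transition system. -/
structure TS.Path {S : Type} (T : TS S) where
  seq : ℕ → S
  valid : ∀ i, T.step (seq i) (seq (i + 1))

/-- The suffix `π^k` of a path `π`. -/
def TS.Path.suffix {S : Type} {T : TS S} (π : T.Path) (k : ℕ) : T.Path :=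
  ⟨fun i => π.seq (k + i), fun i => π.valid (k + i)⟩

/-- Satisfaction of a branching-time formula on a path of a transition system. -/
def Sat {S : Type} (T : TS S) : T.Path → Form → Prop
  | _, .tt => True
  | _, .ff => False
  | π, .prop p => p ∈ T.label (π.seq 0)
  | π, .nprop p => p ∉ T.label (π.seq 0)
  | π, .or a b => Sat T π a ∨ Sat T π b
  | π, .and a b => Sat T π a ∧ Sat T π b
  | π, .next a => Sat T (π.suffix 1) a
  | π, .unt a b => ∃ k, Sat T (π.suffix k) b ∧ ∀ j < k, Sat T (π.suffix j) a
  | π, .rel a b => ∀ k, Sat T (π.suffix k) b ∨ ∃ j < k, Sat T (π.suffix j) a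
  | π, .ex a => ∃ π' : T.Path, π'.seq 0 = π.seq 0 ∧ Sat T π' a
  | π, .al a => ∀ π' : T.Path, π'.seq 0 = π.seq 0 → Sat T π' a

/-- A state formula: satisfaction only depends on the first state of the path. -/
def IsStateForm (φ : Form) : Prop :=
  ∀ (S : Type) (T : TS S) (π π' : T.Path), π.seq 0 = π'.seq 0 → (Sat T π φ ↔ Sat T π' φ)

/-- A (state) formula is satisfiable if it holds at the initial state of some
transition system. -/
def Satisfiable (φ : Form) : Prop :=
  ∃ (S : Type) (T : TS S) (π : T.Path), π.seq 0 = T.init ∧ Sat T π φ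

/-- Equivalence of branching-time formulas. -/
def FormEquiv (φ ψ : Form) : Prop :=
  ∀ (S : Type) (T : TS S) (π : T.Path), Sat T π φ ↔ Sat T π ψ

/-- The conjunction of a list of formulas. -/
def bigAnd : List Form → Form
  | [] => .tt
  | [φ] => φ
  | φ :: rest => .and φ (bigAnd rest)

/-- The formula `⋀_{i<n} EX(¬p_i ∧ p_{i+1}) ∧ ⋀_{i<n} AX(¬p_i ∨ p_{i+1})`. -/
def branchForm (n : ℕ) (p : ℕ → ℕ) : Form :=
  bigAnd
    (((List.range n).map fun i =>
        Form.ex (.next (.and (.nprop (p i)) (.prop (p (i + 1)))))) ++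
     ((List.range n).map fun i =>
        Form.al (.next (.or (.nprop (p i)) (.prop (p (i + 1)))))))

/-!
A state `s` satisfying the formula has, for each `i < n`, a successor `tᵢ` with `¬pᵢ ∧ pᵢ₊₁`.
Every successor satisfies `pᵢ → pᵢ₊₁`, so `tᵢ` carries `pⱼ` for all `i < j ≤ n`; since `tⱼ`
lacks `pⱼ`, the successors `t₀, …, tₙ₋₁` are pairwise distinct. For satisfiability, take the
complete graph on `ℕ` and label state `k` by `pₖ, …, pₙ`: state `i + 1` witnesses the `i`-th
`EX` conjunct, and distinctness of the constants makes every `AX` conjunct hold.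
-/

namespace TS

variable {S : Type} (T : TS S)

noncomputable def pathFrom (s : S) : T.Path where
  seq k := (fun t => Classical.choose (T.total t))^[k] s
  valid k := by
    rw [Function.iterate_succ_apply']
    exact Classical.choose_spec (T.total _)

variable {T}

def Path.cons (s : S) (π : T.Path) (h : T.step s (π.seq 0)) : T.Path where
  seq
    | 0 => s
    | k + 1 => π.seq k
  valid
    | 0 => h
    | k + 1 => π.valid k

theorem exists_path_iff_exists_step {s : S} {P : S → Prop} :
    (∃ π : T.Path, π.seq 0 = s ∧ P (π.seq 1)) ↔ ∃ t, T.step s t ∧ P t := by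
  constructor
  · rintro ⟨π, rfl, hπ⟩
    exact ⟨π.seq 1, π.valid 0, hπ⟩
  · rintro ⟨t, hst, ht⟩
    exact ⟨.cons s (T.pathFrom t) hst, rfl, ht⟩

theorem forall_path_iff_forall_step {s : S} {P : S → Prop} :
    (∀ π : T.Path, π.seq 0 = s → P (π.seq 1)) ↔ ∀ t, T.step s t → P t := by
  constructor
  · intro h t hst
    exact h (.cons s (T.pathFrom t) hst) rfl
  · rintro h π rfl
    exact h _ (π.valid 0)

end TS

section Semantics

variable {S : Type} {T : TS S}

theorem sat_bigAnd (π : T.Path) (L : List Form) :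
    Sat T π (bigAnd L) ↔ ∀ φ ∈ L, Sat T π φ := by
  induction L with
  | nil => simp [bigAnd, Sat]
  | cons φ L ih =>
    cases L with
    | nil => simp [bigAnd]
    | cons ψ R =>
      show Sat T π (.and φ (bigAnd (ψ :: R))) ↔ _
      rw [Sat, ih]
      exact List.forall_mem_cons.symm

theorem sat_ex_next_nprop_and_prop (π : T.Path) (a b : ℕ) :
    Sat T π (.ex (.next (.and (.nprop a) (.prop b)))) ↔
      ∃ t, T.step (π.seq 0) t ∧ a ∉ T.label t ∧ b ∈ T.label t := by
  simp only [Sat, TS.Path.suffix, Nat.add_zero]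
  exact TS.exists_path_iff_exists_step (P := fun t => a ∉ T.label t ∧ b ∈ T.label t)

theorem sat_al_next_nprop_or_prop (π : T.Path) (a b : ℕ) :
    Sat T π (.al (.next (.or (.nprop a) (.prop b)))) ↔
      ∀ t, T.step (π.seq 0) t → a ∉ T.label t ∨ b ∈ T.label t := by
  simp only [Sat, TS.Path.suffix, Nat.add_zero]
  exact TS.forall_path_iff_forall_step (P := fun t => a ∉ T.label t ∨ b ∈ T.label t)

theorem sat_branchForm_iff (π : T.Path) (n : ℕ) (p : ℕ → ℕ) :
    Sat T π (branchForm n p) ↔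
      (∀ i < n, ∃ t, T.step (π.seq 0) t ∧ p i ∉ T.label t ∧ p (i + 1) ∈ T.label t) ∧
      (∀ i < n, ∀ t, T.step (π.seq 0) t → p i ∉ T.label t ∨ p (i + 1) ∈ T.label t) := by
  simp only [branchForm, sat_bigAnd, List.forall_mem_append, List.forall_mem_map,
    List.mem_range, sat_ex_next_nprop_and_prop, sat_al_next_nprop_or_prop]

theorem isStateForm_branchForm (n : ℕ) (p : ℕ → ℕ) : IsStateForm (branchForm n p) := by
  intro S T π π' h
  rw [sat_branchForm_iff, sat_branchForm_iff, h]

end Semantics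

theorem TS.exists_injective_successors {S : Type} {T : TS S} {s : S} {n : ℕ} {p : ℕ → ℕ}
    (hE : ∀ i < n, ∃ t, T.step s t ∧ p i ∉ T.label t ∧ p (i + 1) ∈ T.label t)
    (hA : ∀ i < n, ∀ t, T.step s t → p i ∉ T.label t ∨ p (i + 1) ∈ T.label t) :
    ∃ f : Fin n → S, Function.Injective f ∧ ∀ i : Fin n, T.step s (f i) := by
  choose t hstep hnot hmem using hE
  have propagate : ∀ i (hi : i < n) j, i + 1 ≤ j → j ≤ n → p j ∈ T.label (t i hi) := by
    intro i hi j hij hjn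
    induction j, hij using Nat.le_induction with
    | base => exact hmem i hi
    | succ j _ ih =>
      exact (hA j (by omega) _ (hstep i hi)).resolve_left (not_not.2 (ih (by omega)))
  refine ⟨fun i => t i i.2, .of_lt_imp_ne fun i j hij heq => ?_, fun i => hstep i i.2⟩
  exact hnot j j.2 (heq ▸ propagate i i.2 j hij j.2.le)

def branchModel (n : ℕ) (p : ℕ → ℕ) : TS ℕ where
  init := 0
  step _ _ := True
  total s := ⟨s, trivial⟩
  label k := p '' Set.Icc k n

theorem sat_branchModel {n : ℕ} {p : ℕ → ℕ} (hp : ∀ i j, i ≤ n → j ≤ n → p i = p j → i = j)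
    (π : (branchModel n p).Path) : Sat (branchModel n p) π (branchForm n p) := by
  rw [sat_branchForm_iff]
  have not_mem : ∀ i < n, ∀ k, i < k → p i ∉ p '' Set.Icc k n := by
    rintro i hi k hik ⟨j, ⟨hkj, hjn⟩, hji⟩
    have := hp j i hjn hi.le hji
    omega
  refine ⟨fun i hi => ⟨i + 1, trivial, not_mem i hi _ (by omega), ⟨i + 1, ⟨le_rfl, hi⟩, rfl⟩⟩,
    fun i hi k _ => ?_⟩
  by_cases hk : k ≤ i + 1
  · exact .inr ⟨i + 1, ⟨hk, hi⟩, rfl⟩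
  · exact .inl (not_mem i hi k (by omega))

theorem satisfiable_branchForm {n : ℕ} {p : ℕ → ℕ}
    (hp : ∀ i j, i ≤ n → j ≤ n → p i = p j → i = j) : Satisfiable (branchForm n p) :=
  ⟨ℕ, branchModel n p, (branchModel n p).pathFrom 0, rfl, sat_branchModel hp _⟩

theorem branching_width_lower_bound_general (n : ℕ) (p : ℕ → ℕ)
    (hp : ∀ i j, i ≤ n → j ≤ n → p i = p j → i = j) :
    (IsStateForm (branchForm n p) ∧ Satisfiable (branchForm n p)) ∧
    ∀ (S : Type) (T : TS S) (s : S),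
      (∃ π : T.Path, π.seq 0 = s ∧ Sat T π (branchForm n p)) →
      ∃ f : Fin n → S, Function.Injective f ∧ ∀ i : Fin n, T.step s (f i) := by
  refine ⟨⟨isStateForm_branchForm n p, satisfiable_branchForm hp⟩, ?_⟩
  rintro S T s ⟨π, rfl, hsat⟩
  obtain ⟨hE, hA⟩ := (sat_branchForm_iff π n p).1 hsat
  exact TS.exists_injective_successors hE hA

/-- **Claim.** For pairwise distinct propositional constants `p_1, …, p_{n+1}`, the
formula `⋀ EX(¬p_i ∧ p_{i+1}) ∧ ⋀ AX(p_i → p_{i+1})` is a satisfiable CTL* formula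
and forces every state satisfying it to have at least `n` distinct successors. -/
theorem branching_width_lower_bound (n : ℕ) (hn : 1 ≤ n) (p : ℕ → ℕ)
    (hp : ∀ i j, i ≤ n → j ≤ n → p i = p j → i = j) :
    (IsStateForm (branchForm n p) ∧ Satisfiable (branchForm n p)) ∧
    ∀ (S : Type) (T : TS S) (s : S),
      (∃ π : T.Path, π.seq 0 = s ∧ Sat T π (branchForm n p)) →
      ∃ f : Fin n → S, Function.Injective f ∧ ∀ i : Fin n, T.step s (f i) :=
  branching_width_lower_bound_general n p hp
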